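/- arXiv:1407.0499 — 3 statements merged into one kernel-verified Lean document; each statement's English description precedes it below -/
import Mathlib

section
/- For every c ∈ ℝ^d, the integral ∫_{ℝ^d} e^{c·x} f_h(x) dx converges absolutely and equals exp(h cᵀ a₀ c / 2) · (1 + h (b·c + (1/2) cᵀ a c)). -/
open MeasureTheory Matrix

/-- The density candidate `f_h` from the paper: for `x ∈ ℝ^d`,
`f_h(x) = (2πh)^{-d/2} (det a₀)^{-1/2} exp(-xᵀa₀⁻¹x/(2h))
  (1 - (1/2) a·a₀⁻¹ + b·(a₀⁻¹x) + (1/(2h))(a₀⁻¹x)ᵀ a (a₀⁻¹x))`,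
where `A · B := Tr(ABᵀ)`. -/
noncomputable def fh (d : ℕ) (h : ℝ) (a₀ a : Matrix (Fin d) (Fin d) ℝ) (b : Fin d → ℝ)
    (x : Fin d → ℝ) : ℝ :=
  (2 * Real.pi * h) ^ (-(d : ℝ) / 2) * a₀.det ^ (-(1 : ℝ) / 2) *
    Real.exp (-(x ⬝ᵥ a₀⁻¹.mulVec x) / (2 * h)) *
    (1 - (1 / 2) * (a * a₀⁻¹ᵀ).trace + b ⬝ᵥ a₀⁻¹.mulVec x +
      (1 / (2 * h)) * (a₀⁻¹.mulVec x ⬝ᵥ a.mulVec (a₀⁻¹.mulVec x)))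

/-!
Substituting `x = √h σ₀ z + h a₀ c` and completing the square turns `e^{c·x} f_h(x) dx` into
`e^{h cᵀa₀c/2} P(y) γ(dz)`, where `γ` is the standard Gaussian measure,
`P(y) = 1 - ½ a·a₀⁻¹ + b·y + yᵀay/(2h)` and `y = a₀⁻¹x = √h σ₀⁻ᵀ z + h c`; the Jacobian
`√h^d |det σ₀|` and the constant of `f_h` combine to the `(2π)^{-d/2}` of `γ`. Under `γ` the
vector `y` has mean `h c` and second moment matrix `h a₀⁻¹ + h² c cᵀ`, so the integral of `P(y)` is
`1 - ½ a·a₀⁻¹ + h b·c + ½ a·a₀⁻¹ + (h/2) cᵀac`: the trace terms cancel.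
-/

open Real ProbabilityTheory

lemma integral_mul_exp_neg_sq_div_two_eq_integral_gaussianReal (f : ℝ → ℝ) :
    ∫ x, f x * exp (-x ^ 2 / 2) = √(2 * π) * ∫ x, f x ∂gaussianReal 0 1 := by
  rw [integral_gaussianReal_eq_integral_smul one_ne_zero, ← integral_const_mul]
  congr 1 with x
  have : √(2 * π) ≠ 0 := by positivity
  simp only [gaussianPDFReal_def, NNReal.coe_one, mul_one, sub_zero, smul_eq_mul]
  field_simp

lemma integrable_pow_mul_exp_neg_sq_div_two (n : ℕ) :
    Integrable fun x : ℝ => x ^ n * exp (-x ^ 2 / 2) := by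
  have hn : (-1 : ℝ) < n := by linarith [n.cast_nonneg (α := ℝ)]
  convert integrable_rpow_mul_exp_neg_mul_sq (b := 1 / 2) (by norm_num) hn using 2 with x
  rw [rpow_natCast]
  ring_nf

lemma integral_exp_neg_sq_div_two : ∫ x : ℝ, exp (-x ^ 2 / 2) = √(2 * π) := by
  simpa using integral_mul_exp_neg_sq_div_two_eq_integral_gaussianReal fun _ => 1

lemma integral_id_mul_exp_neg_sq_div_two : ∫ x : ℝ, x * exp (-x ^ 2 / 2) = 0 := by
  simp [integral_mul_exp_neg_sq_div_two_eq_integral_gaussianReal fun x => x]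

lemma integral_sq_mul_exp_neg_sq_div_two : ∫ x : ℝ, x ^ 2 * exp (-x ^ 2 / 2) = √(2 * π) := by
  have hvar := variance_fun_id_gaussianReal (μ := 0) (v := 1)
  rw [variance_eq_integral measurable_id'.aemeasurable] at hvar
  simp only [integral_id_gaussianReal, sub_zero, NNReal.coe_one] at hvar
  rw [integral_mul_exp_neg_sq_div_two_eq_integral_gaussianReal fun x => x ^ 2, hvar, mul_one]

section monomial

variable {ι M : Type*} [Fintype ι] [DecidableEq ι] [CommMonoid M]

lemma prod_pow_single (z : ι → M) (i : ι) : ∏ k, z k ^ (Pi.single i 1 : ι → ℕ) k = z i := by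
  simp [Pi.single_apply, pow_ite]

lemma prod_pow_single_add_single (z : ι → M) (i j : ι) :
    ∏ k, z k ^ (Pi.single i 1 + Pi.single j 1 : ι → ℕ) k = z i * z j := by
  simp only [Pi.add_apply, pow_add, Finset.prod_mul_distrib, prod_pow_single]

end monomial

variable {ι : Type*} [Fintype ι]

noncomputable def gaussianWeight (z : ι → ℝ) : ℝ := exp (-(z ⬝ᵥ z) / 2)

lemma monomial_mul_gaussianWeight (n : ι → ℕ) (z : ι → ℝ) :
    (∏ k, z k ^ n k) * gaussianWeight z = ∏ k, z k ^ n k * exp (-z k ^ 2 / 2) := by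
  rw [gaussianWeight, Finset.prod_mul_distrib, ← exp_sum, dotProduct, ← Finset.sum_neg_distrib,
    Finset.sum_div]
  simp only [sq]

lemma integrable_monomial_mul_gaussianWeight (n : ι → ℕ) :
    Integrable fun z : ι → ℝ => (∏ k, z k ^ n k) * gaussianWeight z := by
  simp_rw [monomial_mul_gaussianWeight]
  exact Integrable.fintype_prod fun k => integrable_pow_mul_exp_neg_sq_div_two (n k)

lemma integral_monomial_mul_gaussianWeight (n : ι → ℕ) :
    ∫ z : ι → ℝ, (∏ k, z k ^ n k) * gaussianWeight z =
      ∏ k, ∫ x : ℝ, x ^ n k * exp (-x ^ 2 / 2) := by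
  simp_rw [monomial_mul_gaussianWeight]
  exact integral_fintype_prod_volume_eq_prod fun k x => x ^ n k * exp (-x ^ 2 / 2)

lemma integrable_gaussianWeight : Integrable (gaussianWeight : (ι → ℝ) → ℝ) := by
  simpa using integrable_monomial_mul_gaussianWeight (0 : ι → ℕ)

lemma integral_gaussianWeight : ∫ z : ι → ℝ, gaussianWeight z = √(2 * π) ^ Fintype.card ι := by
  simpa [integral_exp_neg_sq_div_two] using integral_monomial_mul_gaussianWeight (0 : ι → ℕ)

lemma gaussianWeight_mul_quadratic (α : ℝ) (v : ι → ℝ) (M : Matrix ι ι ℝ) (z : ι → ℝ) :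
    gaussianWeight z * (α + v ⬝ᵥ z + z ⬝ᵥ M *ᵥ z) =
      α * gaussianWeight z + ∑ i, v i * (z i * gaussianWeight z) +
        ∑ i, ∑ j, M i j * (z i * z j * gaussianWeight z) := by
  simp only [dotProduct, mulVec, mul_add, Finset.mul_sum]
  congr 1
  · congr 1
    · ring
    · exact Finset.sum_congr rfl fun i _ => by ring
  · exact Finset.sum_congr rfl fun i _ => Finset.sum_congr rfl fun j _ => by ring

lemma quadratic_comp_mulVec_add (A B : Matrix ι ι ℝ) (α : ℝ) (β u z : ι → ℝ) :
    α + β ⬝ᵥ (A *ᵥ z + u) + (A *ᵥ z + u) ⬝ᵥ B *ᵥ (A *ᵥ z + u) =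
      (α + β ⬝ᵥ u + u ⬝ᵥ B *ᵥ u) + Aᵀ *ᵥ (β + B *ᵥ u + Bᵀ *ᵥ u) ⬝ᵥ z +
        z ⬝ᵥ (Aᵀ * B * A) *ᵥ z := by
  have h₁ : β ⬝ᵥ A *ᵥ z = Aᵀ *ᵥ β ⬝ᵥ z := by rw [dotProduct_mulVec, mulVec_transpose]
  have h₂ : u ⬝ᵥ B *ᵥ A *ᵥ z = Aᵀ *ᵥ Bᵀ *ᵥ u ⬝ᵥ z := by
    rw [dotProduct_mulVec, dotProduct_mulVec, mulVec_transpose, mulVec_transpose]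
  have h₃ : A *ᵥ z ⬝ᵥ B *ᵥ u = Aᵀ *ᵥ B *ᵥ u ⬝ᵥ z := by
    rw [dotProduct_comm, dotProduct_mulVec, mulVec_transpose]
  have h₄ : A *ᵥ z ⬝ᵥ B *ᵥ A *ᵥ z = z ⬝ᵥ (Aᵀ * B * A) *ᵥ z := by
    rw [← mulVec_mulVec, ← mulVec_mulVec, dotProduct_mulVec z, vecMul_transpose, dotProduct_comm]
  simp only [mulVec_add, dotProduct_add, add_dotProduct, h₁, h₂, h₃, h₄]
  ring

section moments

variable [DecidableEq ι]

lemma integrable_apply_mul_gaussianWeight (i : ι) :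
    Integrable fun z : ι → ℝ => z i * gaussianWeight z := by
  simp_rw [← prod_pow_single _ i]
  exact integrable_monomial_mul_gaussianWeight _

lemma integral_apply_mul_gaussianWeight (i : ι) : ∫ z : ι → ℝ, z i * gaussianWeight z = 0 := by
  simp_rw [← prod_pow_single _ i, integral_monomial_mul_gaussianWeight]
  exact Finset.prod_eq_zero (Finset.mem_univ i) (by simpa using integral_id_mul_exp_neg_sq_div_two)

lemma integrable_apply_mul_apply_mul_gaussianWeight (i j : ι) :
    Integrable fun z : ι → ℝ => z i * z j * gaussianWeight z := by
  simp_rw [← prod_pow_single_add_single _ i j]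
  exact integrable_monomial_mul_gaussianWeight _

lemma integral_apply_mul_apply_mul_gaussianWeight (i j : ι) :
    ∫ z : ι → ℝ, z i * z j * gaussianWeight z =
      if i = j then √(2 * π) ^ Fintype.card ι else 0 := by
  simp_rw [← prod_pow_single_add_single _ i j, integral_monomial_mul_gaussianWeight]
  split_ifs with hij
  · subst hij
    rw [← Finset.card_univ, ← Finset.prod_const]
    refine Finset.prod_congr rfl fun k _ => ?_
    by_cases hk : k = i
    · simpa [hk] using integral_sq_mul_exp_neg_sq_div_two
    · simpa [hk] using integral_exp_neg_sq_div_two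
  · exact Finset.prod_eq_zero (Finset.mem_univ i)
      (by simpa [hij] using integral_id_mul_exp_neg_sq_div_two)

end moments

section quadratic

variable (α : ℝ) (v : ι → ℝ) (M : Matrix ι ι ℝ)

lemma integrable_linear_mul_gaussianWeight :
    Integrable fun z : ι → ℝ => ∑ i, v i * (z i * gaussianWeight z) := by
  classical
  exact integrable_finsetSum _ fun i _ => (integrable_apply_mul_gaussianWeight i).const_mul _

lemma integrable_quadratic_mul_gaussianWeight :
    Integrable fun z : ι → ℝ => ∑ i, ∑ j, M i j * (z i * z j * gaussianWeight z) := by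
  classical
  exact integrable_finsetSum _ fun i _ => integrable_finsetSum _ fun j _ =>
    (integrable_apply_mul_apply_mul_gaussianWeight i j).const_mul _

lemma integrable_gaussianWeight_mul_quadratic :
    Integrable fun z : ι → ℝ => gaussianWeight z * (α + v ⬝ᵥ z + z ⬝ᵥ M *ᵥ z) := by
  simp_rw [gaussianWeight_mul_quadratic]
  exact ((integrable_gaussianWeight.const_mul α).fun_add
    (integrable_linear_mul_gaussianWeight v)).fun_add (integrable_quadratic_mul_gaussianWeight M)

lemma integral_gaussianWeight_mul_quadratic :
    ∫ z : ι → ℝ, gaussianWeight z * (α + v ⬝ᵥ z + z ⬝ᵥ M *ᵥ z) =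
      √(2 * π) ^ Fintype.card ι * (α + M.trace) := by
  classical
  have hlin : ∫ z : ι → ℝ, ∑ i, v i * (z i * gaussianWeight z) = 0 := by
    rw [integral_finsetSum _ fun i _ => (integrable_apply_mul_gaussianWeight i).const_mul _]
    simp [integral_const_mul, integral_apply_mul_gaussianWeight]
  have hquad : ∫ z : ι → ℝ, ∑ i, ∑ j, M i j * (z i * z j * gaussianWeight z) =
      √(2 * π) ^ Fintype.card ι * M.trace := by
    rw [integral_finsetSum (f := fun i z => ∑ j, M i j * (z i * z j * gaussianWeight z)) _
      fun i _ => integrable_finsetSum _ fun j _ =>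
        (integrable_apply_mul_apply_mul_gaussianWeight i j).const_mul _]
    simp_rw [integral_finsetSum _ fun j _ =>
      (integrable_apply_mul_apply_mul_gaussianWeight _ j).const_mul _, integral_const_mul,
      integral_apply_mul_apply_mul_gaussianWeight]
    simp [Matrix.trace, Finset.mul_sum, mul_comm]
  simp_rw [gaussianWeight_mul_quadratic]
  rw [integral_add ((integrable_gaussianWeight.const_mul α).fun_add
      (integrable_linear_mul_gaussianWeight v)) (integrable_quadratic_mul_gaussianWeight M),
    integral_add (integrable_gaussianWeight.const_mul α) (integrable_linear_mul_gaussianWeight v),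
    integral_const_mul, integral_gaussianWeight, hlin, hquad]
  ring

end quadratic

section affine

variable (α : ℝ) (β u : ι → ℝ) (A B : Matrix ι ι ℝ)

lemma integrable_gaussianWeight_mul_quadratic_comp_mulVec_add :
    Integrable fun z : ι → ℝ =>
      gaussianWeight z * (α + β ⬝ᵥ (A *ᵥ z + u) + (A *ᵥ z + u) ⬝ᵥ B *ᵥ (A *ᵥ z + u)) := by
  simp_rw [quadratic_comp_mulVec_add]
  exact integrable_gaussianWeight_mul_quadratic _ _ _

lemma integral_gaussianWeight_mul_quadratic_comp_mulVec_add :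
    ∫ z : ι → ℝ, gaussianWeight z * (α + β ⬝ᵥ (A *ᵥ z + u) + (A *ᵥ z + u) ⬝ᵥ B *ᵥ (A *ᵥ z + u)) =
      √(2 * π) ^ Fintype.card ι * (α + β ⬝ᵥ u + u ⬝ᵥ B *ᵥ u + (B * (A * Aᵀ)).trace) := by
  simp_rw [quadratic_comp_mulVec_add]
  rw [integral_gaussianWeight_mul_quadratic, mul_assoc, trace_mul_comm, ← mul_assoc,
    trace_mul_comm]

end affine

section changeOfVariables

variable [DecidableEq ι]

lemma hasFDerivAt_mulVec_add (R : Matrix ι ι ℝ) (x₀ z : ι → ℝ) :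
    HasFDerivAt (fun z => R *ᵥ z + x₀) (LinearMap.toContinuousLinearMap (toLin' R)) z :=
  (LinearMap.toContinuousLinearMap (toLin' R)).hasFDerivAt.add_const x₀

variable {R : Matrix ι ι ℝ}

lemma bijective_mulVec_add (hR : IsUnit R) (x₀ : ι → ℝ) :
    Function.Bijective fun z => R *ᵥ z + x₀ := by
  refine ⟨(add_left_injective x₀).comp (mulVec_injective_iff_isUnit.mpr hR), fun x =>
    ⟨R⁻¹ *ᵥ (x - x₀), ?_⟩⟩
  simp [mulVec_mulVec, mul_nonsing_inv _ ((isUnit_iff_isUnit_det R).mp hR)]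

theorem integral_comp_mulVec_add (hR : IsUnit R) (x₀ : ι → ℝ) (F : (ι → ℝ) → ℝ) :
    ∫ z, F (R *ᵥ z + x₀) = |R.det|⁻¹ * ∫ x, F x := by
  have hcov := integral_image_eq_integral_abs_det_fderiv_smul volume MeasurableSet.univ
    (fun z _ => (hasFDerivAt_mulVec_add R x₀ z).hasFDerivWithinAt)
    (bijective_mulVec_add hR x₀).injective.injOn F
  rw [Set.image_univ, (bijective_mulVec_add hR x₀).surjective.range_eq] at hcov
  simp only [Measure.restrict_univ, ContinuousLinearMap.det, LinearMap.coe_toContinuousLinearMap,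
    LinearMap.det_toLin', smul_eq_mul, integral_const_mul] at hcov
  have hdet : |R.det| ≠ 0 := abs_ne_zero.mpr ((isUnit_iff_isUnit_det R).mp hR).ne_zero
  rw [hcov, ← mul_assoc, inv_mul_cancel₀ hdet, one_mul]

theorem integrable_comp_mulVec_add_iff (hR : IsUnit R) (x₀ : ι → ℝ) (F : (ι → ℝ) → ℝ) :
    Integrable (fun z => F (R *ᵥ z + x₀)) ↔ Integrable F := by
  have hcov := integrableOn_image_iff_integrableOn_abs_det_fderiv_smul volume MeasurableSet.univ
    (fun z _ => (hasFDerivAt_mulVec_add R x₀ z).hasFDerivWithinAt)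
    (bijective_mulVec_add hR x₀).injective.injOn F
  rw [Set.image_univ, (bijective_mulVec_add hR x₀).surjective.range_eq] at hcov
  simp only [integrableOn_univ, ContinuousLinearMap.det, LinearMap.coe_toContinuousLinearMap,
    LinearMap.det_toLin', smul_eq_mul] at hcov
  have hdet : |R.det| ≠ 0 := abs_ne_zero.mpr ((isUnit_iff_isUnit_det R).mp hR).ne_zero
  rw [hcov, integrable_const_mul_iff (isUnit_iff_ne_zero.mpr hdet)]

end changeOfVariables

lemma dotProduct_add_sub_dotProduct_self_div {s h : ℝ} (hs : s * s = h) (hh : h ≠ 0)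
    (e z : ι → ℝ) :
    e ⬝ᵥ (s • z + h • e) - (s • z + h • e) ⬝ᵥ (s • z + h • e) / (2 * h) =
      h * (e ⬝ᵥ e) / 2 - z ⬝ᵥ z / 2 := by
  simp only [dotProduct_add, add_dotProduct, dotProduct_smul, smul_dotProduct, smul_eq_mul,
    dotProduct_comm z e]
  field_simp
  rw [← hs]
  ring

section covariance

variable [DecidableEq ι] {σ : Matrix ι ι ℝ}

lemma inv_mul_transpose_mulVec_mulVec (hσ : IsUnit σ) (ξ : ι → ℝ) :
    (σ * σᵀ)⁻¹ *ᵥ (σ *ᵥ ξ) = σ⁻¹ᵀ *ᵥ ξ := by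
  rw [mulVec_mulVec, Matrix.mul_inv_rev, mul_assoc,
    nonsing_inv_mul σ ((isUnit_iff_isUnit_det σ).mp hσ), mul_one, transpose_nonsing_inv]

lemma mulVec_dotProduct_inv_transpose_mulVec (hσ : IsUnit σ) (ξ : ι → ℝ) :
    σ *ᵥ ξ ⬝ᵥ σ⁻¹ᵀ *ᵥ ξ = ξ ⬝ᵥ ξ := by
  rw [dotProduct_comm, dotProduct_mulVec, ← mulVec_transpose, mulVec_mulVec, ← transpose_mul,
    nonsing_inv_mul σ ((isUnit_iff_isUnit_det σ).mp hσ), transpose_one, one_mulVec]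

lemma sqrt_smul_inv_transpose_mul_transpose (σ : Matrix ι ι ℝ) {h : ℝ} (hh : 0 ≤ h) :
    (√h • σ⁻¹ᵀ) * (√h • σ⁻¹ᵀ)ᵀ = h • (σ * σᵀ)⁻¹ᵀ := by
  rw [transpose_smul, transpose_transpose, smul_mul_smul_comm, ← sqrt_mul hh, sqrt_mul_self hh,
    Matrix.mul_inv_rev, transpose_mul, transpose_nonsing_inv σᵀ, transpose_transpose]

end covariance

variable {d : ℕ} {σ : Matrix (Fin d) (Fin d) ℝ} {h : ℝ}

lemma abs_det_sqrt_smul_mul_fh_constant (hσ : IsUnit σ) (hh : 0 < h) :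
    |(√h • σ).det| * ((2 * π * h) ^ (-(d : ℝ) / 2) * (σ * σᵀ).det ^ (-(1 : ℝ) / 2)) *
      √(2 * π) ^ d = 1 := by
  have hσ' : |σ.det| ≠ 0 := abs_ne_zero.mpr ((isUnit_iff_isUnit_det σ).mp hσ).ne_zero
  have h2πh : 0 < 2 * π * h := by positivity
  have hdet : (σ * σᵀ).det ^ (-(1 : ℝ) / 2) = |σ.det|⁻¹ := by
    rw [det_mul, det_transpose, ← abs_mul_abs_self, ← sq, ← rpow_natCast,
      ← rpow_mul (abs_nonneg _)]
    norm_num [rpow_neg_one]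
  have hpow : √(2 * π) ^ d * √h ^ d = (2 * π * h) ^ ((d : ℝ) / 2) := by
    rw [← mul_pow, ← sqrt_mul (by positivity), sqrt_eq_rpow, ← rpow_natCast, ← rpow_mul h2πh.le]
    ring_nf
  rw [det_smul, Fintype.card_fin, abs_mul, abs_pow, abs_of_nonneg (sqrt_nonneg h), hdet]
  calc √h ^ d * |σ.det| * ((2 * π * h) ^ (-(d : ℝ) / 2) * |σ.det|⁻¹) * √(2 * π) ^ d
      = (|σ.det| * |σ.det|⁻¹) * ((2 * π * h) ^ (-(d : ℝ) / 2) * (√(2 * π) ^ d * √h ^ d)) := by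
        ring
    _ = 1 := by
      rw [mul_inv_cancel₀ hσ', hpow, ← rpow_add h2πh, neg_div, neg_add_cancel, rpow_zero, one_mul]

lemma exp_dotProduct_mul_fh_comp_mulVec_add (hσ : IsUnit σ) (hh : 0 < h)
    (a : Matrix (Fin d) (Fin d) ℝ) (b c z : Fin d → ℝ) :
    exp (c ⬝ᵥ ((√h • σ) *ᵥ z + h • (σ * σᵀ) *ᵥ c)) *
        fh d h (σ * σᵀ) a b ((√h • σ) *ᵥ z + h • (σ * σᵀ) *ᵥ c) =
      (2 * π * h) ^ (-(d : ℝ) / 2) * (σ * σᵀ).det ^ (-(1 : ℝ) / 2) *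
        exp (h * (c ⬝ᵥ (σ * σᵀ) *ᵥ c) / 2) *
        (gaussianWeight z * (1 - 1 / 2 * (a * (σ * σᵀ)⁻¹ᵀ).trace +
          b ⬝ᵥ ((√h • σ⁻¹ᵀ) *ᵥ z + h • c) +
          ((√h • σ⁻¹ᵀ) *ᵥ z + h • c) ⬝ᵥ ((1 / (2 * h)) • a) *ᵥ ((√h • σ⁻¹ᵀ) *ᵥ z + h • c))) := by
  set ξ := √h • z + h • σᵀ *ᵥ c with hξ
  have hx : (√h • σ) *ᵥ z + h • (σ * σᵀ) *ᵥ c = σ *ᵥ ξ := by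
    rw [mulVec_add, mulVec_smul, mulVec_smul, smul_mulVec, mulVec_mulVec]
  have hy : σ⁻¹ᵀ *ᵥ ξ = (√h • σ⁻¹ᵀ) *ᵥ z + h • c := by
    rw [mulVec_add, mulVec_smul, mulVec_smul, smul_mulVec, mulVec_mulVec, ← transpose_mul,
      mul_nonsing_inv σ ((isUnit_iff_isUnit_det σ).mp hσ), transpose_one, one_mulVec]
  have hc : c ⬝ᵥ σ *ᵥ ξ = σᵀ *ᵥ c ⬝ᵥ ξ := by rw [dotProduct_mulVec, mulVec_transpose]
  have he : σᵀ *ᵥ c ⬝ᵥ σᵀ *ᵥ c = c ⬝ᵥ (σ * σᵀ) *ᵥ c := by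
    rw [← mulVec_mulVec, dotProduct_mulVec c σ, mulVec_transpose]
  have hexp : exp (σᵀ *ᵥ c ⬝ᵥ ξ) * exp (-(ξ ⬝ᵥ ξ) / (2 * h)) =
      exp (h * (c ⬝ᵥ (σ * σᵀ) *ᵥ c) / 2) * gaussianWeight z := by
    have hsq := dotProduct_add_sub_dotProduct_self_div (mul_self_sqrt hh.le) hh.ne' (σᵀ *ᵥ c) z
    rw [← hξ] at hsq
    rw [← exp_add, gaussianWeight, ← exp_add, ← he]
    congr 1
    linear_combination hsq
  rw [hx, fh, inv_mul_transpose_mulVec_mulVec hσ, mulVec_dotProduct_inv_transpose_mulVec hσ, hy, hc,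
    smul_mulVec (1 / (2 * h)) a, dotProduct_smul, smul_eq_mul]
  set w := (√h • σ⁻¹ᵀ) *ᵥ z + h • c
  linear_combination (2 * π * h) ^ (-(d : ℝ) / 2) * (σ * σᵀ).det ^ (-(1 : ℝ) / 2) *
    (1 - 1 / 2 * (a * (σ * σᵀ)⁻¹ᵀ).trace + b ⬝ᵥ w + 1 / (2 * h) * (w ⬝ᵥ a *ᵥ w)) * hexp

theorem stmt5_general (d : ℕ) (h : ℝ) (hh : 0 < h)
    (σ₀ : Matrix (Fin d) (Fin d) ℝ) (hσ₀ : IsUnit σ₀)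
    (a₀ a : Matrix (Fin d) (Fin d) ℝ) (ha₀ : a₀ = σ₀ * σ₀ᵀ)
    (b : Fin d → ℝ) (c : Fin d → ℝ) :
    Integrable (fun x : Fin d → ℝ => Real.exp (c ⬝ᵥ x) * fh d h a₀ a b x)
        (volume : Measure (Fin d → ℝ)) ∧
      ∫ x : Fin d → ℝ, Real.exp (c ⬝ᵥ x) * fh d h a₀ a b x =
        Real.exp (h * (c ⬝ᵥ a₀.mulVec c) / 2) *
          (1 + h * (b ⬝ᵥ c + (1 / 2) * (c ⬝ᵥ a.mulVec c))) := by
  subst ha₀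
  have hR : IsUnit (√h • σ₀) := hσ₀.smul (isUnit_iff_ne_zero.mpr (sqrt_pos.mpr hh).ne').unit
  have key := exp_dotProduct_mul_fh_comp_mulVec_add hσ₀ hh a b c
  constructor
  · rw [← integrable_comp_mulVec_add_iff hR (h • (σ₀ * σ₀ᵀ) *ᵥ c)]
    simp_rw [key]
    exact (integrable_gaussianWeight_mul_quadratic_comp_mulVec_add _ _ _ _ _).const_mul _
  · have hcov := integral_comp_mulVec_add hR (h • (σ₀ * σ₀ᵀ) *ᵥ c)
      fun x => exp (c ⬝ᵥ x) * fh d h (σ₀ * σ₀ᵀ) a b x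
    rw [eq_inv_mul_iff_mul_eq₀ (abs_ne_zero.mpr ((isUnit_iff_isUnit_det _).mp hR).ne_zero)] at hcov
    simp_rw [key, integral_const_mul, integral_gaussianWeight_mul_quadratic_comp_mulVec_add,
      sqrt_smul_inv_transpose_mul_transpose σ₀ hh.le, Fintype.card_fin] at hcov
    have hmean : 1 - 1 / 2 * (a * (σ₀ * σ₀ᵀ)⁻¹ᵀ).trace + b ⬝ᵥ h • c +
        h • c ⬝ᵥ ((1 / (2 * h)) • a) *ᵥ h • c + ((1 / (2 * h)) • a * h • (σ₀ * σ₀ᵀ)⁻¹ᵀ).trace =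
        1 + h * (b ⬝ᵥ c + 1 / 2 * (c ⬝ᵥ a *ᵥ c)) := by
      simp only [Matrix.smul_mul, Matrix.mul_smul, trace_smul, smul_mulVec, mulVec_smul,
        dotProduct_smul, smul_dotProduct, smul_eq_mul]
      field_simp
      ring
    rw [← hcov, hmean]
    linear_combination exp (h * (c ⬝ᵥ (σ₀ * σ₀ᵀ) *ᵥ c) / 2) *
      (1 + h * (b ⬝ᵥ c + 1 / 2 * (c ⬝ᵥ a *ᵥ c))) * abs_det_sqrt_smul_mul_fh_constant hσ₀ hh

/-- For every `c ∈ ℝ^d`, the integral `∫_{ℝ^d} e^{c·x} f_h(x) dx` converges absolutely and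
equals `exp(h cᵀ a₀ c / 2) · (1 + h (b·c + (1/2) cᵀ a c))`. -/
theorem stmt5 (d : ℕ) (hd : 1 ≤ d) (h : ℝ) (hh : 0 < h)
    (σ₀ : Matrix (Fin d) (Fin d) ℝ) (hσ₀ : IsUnit σ₀)
    (a₀ a : Matrix (Fin d) (Fin d) ℝ) (ha₀ : a₀ = σ₀ * σ₀ᵀ)
    (ha : a.PosSemidef) (b : Fin d → ℝ) (c : Fin d → ℝ) :
    Integrable (fun x : Fin d → ℝ => Real.exp (c ⬝ᵥ x) * fh d h a₀ a b x)
        (volume : Measure (Fin d → ℝ)) ∧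
      ∫ x : Fin d → ℝ, Real.exp (c ⬝ᵥ x) * fh d h a₀ a b x =
        Real.exp (h * (c ⬝ᵥ a₀.mulVec c) / 2) *
          (1 + h * (b ⬝ᵥ c + (1 / 2) * (c ⬝ᵥ a.mulVec c))) :=
  stmt5_general d h hh σ₀ hσ₀ a₀ a ha₀ b c
end

section
/- For every h₀ > 0, setting C₁ := E[ |σ₀ N|³ ( 1 + √h₀ |b · ((σ₀ᵀ)⁻¹ N)| + (1/2) |a · ((σ₀ᵀ)⁻¹ (N Nᵀ − I_d) σ₀⁻¹)| ) ], where N is a standard Gaussian random vector in ℝ^d (mean 0, identity covariance), one has ∫_{ℝ^d} |x|³ |f_h(x)| dx ≤ C₁ h^{3/2} for every 0 < h ≤ h₀; moreover C₁ < ∞ and C₁ does not depend on h. -/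
open MeasureTheory Matrix

/-- The standard Gaussian measure on `ℝ^d` (mean `0`, identity covariance),
realized as a product of one-dimensional standard Gaussians. -/
noncomputable def stdGaussianPi (d : ℕ) : Measure (Fin d → ℝ) :=
  Measure.pi fun _ => ProbabilityTheory.gaussianReal 0 1

/-- The Euclidean norm on `ℝ^d`. -/
noncomputable def enorm {d : ℕ} (v : Fin d → ℝ) : ℝ :=
  Real.sqrt (∑ i, v i ^ 2)

/-- The integrand defining the constant
`C₁ := E[ |σ₀N|³ (1 + √h₀ |b·((σ₀ᵀ)⁻¹N)| + (1/2)|a·((σ₀ᵀ)⁻¹(NNᵀ − I)σ₀⁻¹)|) ]`,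
where `N` is a standard Gaussian vector and `A · B := Tr(ABᵀ)`. -/
noncomputable def C₁fun (d : ℕ) (σ₀ a : Matrix (Fin d) (Fin d) ℝ) (b : Fin d → ℝ)
    (h₀ : ℝ) (y : Fin d → ℝ) : ℝ :=
  _root_.enorm (σ₀.mulVec y) ^ 3 *
    (1 + Real.sqrt h₀ * |b ⬝ᵥ (σ₀ᵀ)⁻¹.mulVec y| +
      (1 / 2) * |(a * ((σ₀ᵀ)⁻¹ * (vecMulVec y y - 1) * σ₀⁻¹)ᵀ).trace|)

/-! The substitution `x = √h σ₀ y` turns `|det (√h σ₀)| · |x|³ |f_h(x)|` into `h^{3/2}` times the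
standard Gaussian density of `y` times `|σ₀y|³ |1 + √h b·((σ₀ᵀ)⁻¹y) + ½ a·((σ₀ᵀ)⁻¹(yyᵀ − I)σ₀⁻¹)|`;
the triangle inequality and `√h ≤ √h₀` bound the last factor by the one in the integrand of `C₁`.
That integrand grows at most like `(1 + |y|)⁵`, and a Gaussian measure has moments of all orders,
so `C₁ < ∞`. -/

open ProbabilityTheory Asymptotics
open scoped ENNReal

theorem lintegral_fin_prod_eq_prod {α : Type*} [MeasurableSpace α] (μ : Measure α) [SigmaFinite μ]
    {n : ℕ} (f : Fin n → α → ℝ≥0∞) (hf : ∀ i, Measurable (f i)) :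
    ∫⁻ x : Fin n → α, ∏ i, f i (x i) ∂(Measure.pi fun _ => μ) = ∏ i, ∫⁻ t, f i t ∂μ := by
  induction n with
  | zero => simp
  | succ n ih =>
    rw [← (measurePreserving_piFinSuccAbove (fun _ : Fin (n + 1) => μ) 0).symm.lintegral_comp_emb
      (MeasurableEquiv.measurableEmbedding _)]
    simp_rw [MeasurableEquiv.piFinSuccAbove_symm_apply, Fin.insertNthEquiv,
      Fin.prod_univ_succ, Fin.insertNth_zero]
    simp only [Fin.cons_zero, Fin.cons_succ, Equiv.coe_fn_mk, cast_eq]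
    have hmeas : Measurable fun z : Fin n → α => ∏ i, f i.succ (z i) :=
      Finset.measurable_prod _ fun i _ => (hf i.succ).comp (measurable_pi_apply i)
    rw [lintegral_prod_mul (hf 0).aemeasurable hmeas.aemeasurable,
      ih (fun i => f i.succ) (fun i => hf i.succ)]

theorem stdGaussianPi_eq_withDensity (d : ℕ) :
    stdGaussianPi d = volume.withDensity fun y => ∏ i, gaussianPDF 0 1 (y i) := by
  refine Measure.pi_eq fun s hs => ?_
  have hbox : ∀ y : Fin d → ℝ, (Set.univ.pi s).indicator (fun y => ∏ i, gaussianPDF 0 1 (y i)) y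
      = ∏ i, (s i).indicator (gaussianPDF 0 1) (y i) := by
    intro y
    classical
    simp only [Set.indicator_apply, Set.mem_univ_pi]
    rw [Finset.prod_ite_zero]
    simp
  rw [withDensity_apply _ (MeasurableSet.univ_pi hs),
    ← lintegral_indicator (MeasurableSet.univ_pi hs)]
  simp_rw [hbox, volume_pi]
  rw [lintegral_fin_prod_eq_prod volume _ fun i => (measurable_gaussianPDF 0 1).indicator (hs i)]
  refine Finset.prod_congr rfl fun i _ => ?_
  rw [gaussianReal_of_var_ne_zero 0 one_ne_zero, withDensity_apply _ (hs i),
    ← lintegral_indicator (hs i)]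

theorem measurable_gaussianPDF_pi (d : ℕ) :
    Measurable fun y : Fin d → ℝ => ∏ i, gaussianPDF 0 1 (y i) :=
  Finset.measurable_prod _ fun i _ => (measurable_gaussianPDF 0 1).comp (measurable_pi_apply i)

theorem prod_gaussianPDF_lt_top {d : ℕ} (y : Fin d → ℝ) : ∏ i, gaussianPDF 0 1 (y i) < ∞ :=
  ENNReal.prod_lt_top fun i _ => by simp [gaussianPDF_def]

theorem toReal_prod_gaussianPDF {d : ℕ} (y : Fin d → ℝ) :
    (∏ i, gaussianPDF 0 1 (y i)).toReal = ∏ i, gaussianPDFReal 0 1 (y i) := by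
  simp [ENNReal.toReal_prod, gaussianPDF_def, gaussianPDFReal_nonneg]

theorem integral_stdGaussianPi {d : ℕ} (g : (Fin d → ℝ) → ℝ) :
    ∫ y, g y ∂stdGaussianPi d = ∫ y, (∏ i, gaussianPDFReal 0 1 (y i)) * g y := by
  rw [stdGaussianPi_eq_withDensity, integral_withDensity_eq_integral_toReal_smul
    (measurable_gaussianPDF_pi d) (ae_of_all _ fun y => prod_gaussianPDF_lt_top y)]
  simp_rw [toReal_prod_gaussianPDF, smul_eq_mul]

theorem integrable_stdGaussianPi_iff {d : ℕ} {g : (Fin d → ℝ) → ℝ} :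
    Integrable g (stdGaussianPi d) ↔
      Integrable (fun y => (∏ i, gaussianPDFReal 0 1 (y i)) * g y) := by
  rw [stdGaussianPi_eq_withDensity, integrable_withDensity_iff_integrable_smul'
    (measurable_gaussianPDF_pi d) (ae_of_all _ fun y => prod_gaussianPDF_lt_top y)]
  simp_rw [toReal_prod_gaussianPDF, smul_eq_mul]

theorem prod_gaussianPDFReal {d : ℕ} (y : Fin d → ℝ) :
    ∏ i, gaussianPDFReal 0 1 (y i) = (2 * Real.pi) ^ (-(d : ℝ) / 2) * Real.exp (-(y ⬝ᵥ y) / 2) := by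
  simp only [gaussianPDFReal, NNReal.coe_one, mul_one, sub_zero, Finset.prod_mul_distrib,
    Finset.prod_const, Finset.card_univ, Fintype.card_fin, ← Real.exp_sum, dotProduct]
  congr 1
  · rw [neg_div, Real.rpow_neg (by positivity), Real.rpow_div_two_eq_sqrt _ (by positivity),
      Real.rpow_natCast, inv_pow]
  · simp only [neg_div, Finset.sum_neg_distrib, Finset.sum_div, sq]

instance isGaussian_stdGaussianPi (d : ℕ) : IsGaussian (stdGaussianPi d) := by
  have h : stdGaussianPi d = (stdGaussian (EuclideanSpace ℝ (Fin d))).map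
      (PiLp.continuousLinearEquiv 2 ℝ (fun _ : Fin d => ℝ)) := by
    rw [← map_pi_eq_stdGaussian, Measure.map_map (by fun_prop) (by fun_prop)]
    exact Measure.map_id.symm
  rw [h]
  infer_instance

theorem integrable_one_add_norm_pow {E : Type*} [NormedAddCommGroup E] [NormedSpace ℝ E]
    [CompleteSpace E] [SecondCountableTopology E] [MeasurableSpace E] [BorelSpace E]
    (μ : Measure E) [IsGaussian μ] (n : ℕ) : Integrable (fun x => (1 + ‖x‖) ^ n) μ := by
  have hnorm : MemLp (fun x => ‖x‖) n μ := (IsGaussian.memLp_id μ n (by simp)).norm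
  have h : MemLp (fun x => 1 + ‖x‖) n μ := (memLp_const (1 : ℝ)).add hnorm
  refine h.integrable_norm_pow'.congr (ae_of_all _ fun x => ?_)
  simp only [Real.norm_eq_abs, abs_of_nonneg (by positivity : (0 : ℝ) ≤ 1 + ‖x‖)]

theorem isBigO_one_add_norm_pow {E : Type*} [SeminormedAddCommGroup E] {m n : ℕ} (hmn : m ≤ n) :
    (fun x : E => (1 + ‖x‖) ^ m) =O[⊤] fun x => (1 + ‖x‖) ^ n :=
  IsBigO.of_bound' (Filter.Eventually.of_forall fun x => by
    rw [Real.norm_of_nonneg (by positivity), Real.norm_of_nonneg (by positivity)]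
    exact pow_le_pow_right₀ (by simp) hmn)

theorem isBigO_const_one_add_norm_pow {E F : Type*} [SeminormedAddCommGroup E] [Norm F]
    (c : F) (n : ℕ) : (fun _ : E => c) =O[⊤] fun x => (1 + ‖x‖) ^ n :=
  (isBigO_const_one ℝ c ⊤).trans (by simpa using isBigO_one_add_norm_pow (E := E) n.zero_le)

theorem LinearMap.isBigO_one_add_norm {E F : Type*} [NormedAddCommGroup E] [NormedSpace ℝ E]
    [FiniteDimensional ℝ E] [NormedAddCommGroup F] [NormedSpace ℝ F] (f : E →ₗ[ℝ] F) :
    f =O[⊤] fun x => (1 + ‖x‖) ^ 1 :=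
  (LinearMap.toContinuousLinearMap f).isBigO_id ⊤ |>.trans <|
    IsBigO.of_bound' (Filter.Eventually.of_forall fun x => by
      rw [pow_one, Real.norm_of_nonneg (by positivity)]
      exact le_add_of_nonneg_left zero_le_one)

theorem Asymptotics.IsBigO.mul_one_add_norm_pow {E : Type*} [Norm E] {l : Filter E}
    {f g : E → ℝ} {m n : ℕ}
    (hf : f =O[l] fun x => (1 + ‖x‖) ^ m) (hg : g =O[l] fun x => (1 + ‖x‖) ^ n) :
    (fun x => f x * g x) =O[l] fun x => (1 + ‖x‖) ^ (m + n) := by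
  simpa only [pow_add] using hf.mul hg

theorem Asymptotics.IsBigO.dotProduct_one_add_norm_pow {E ι : Type*} [Norm E] [Fintype ι]
    {l : Filter E} {f g : E → ι → ℝ} {m n : ℕ}
    (hf : f =O[l] fun x => (1 + ‖x‖) ^ m) (hg : g =O[l] fun x => (1 + ‖x‖) ^ n) :
    (fun x => f x ⬝ᵥ g x) =O[l] fun x => (1 + ‖x‖) ^ (m + n) :=
  IsBigO.fun_sum fun i _ => (isBigO_pi.1 hf i).mul_one_add_norm_pow (isBigO_pi.1 hg i)

theorem enorm_eq_norm_toLp {d : ℕ} (v : Fin d → ℝ) : _root_.enorm v = ‖WithLp.toLp 2 v‖ := by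
  simp [_root_.enorm, EuclideanSpace.norm_eq]

theorem enorm_smul_of_nonneg {d : ℕ} {c : ℝ} (hc : 0 ≤ c) (v : Fin d → ℝ) :
    _root_.enorm (c • v) = c * _root_.enorm v := by
  rw [enorm_eq_norm_toLp, enorm_eq_norm_toLp, WithLp.toLp_smul, norm_smul, Real.norm_of_nonneg hc]

theorem trace_mul_transpose_conj_vecMulVec_sub_one {n R : Type*} [Fintype n] [DecidableEq n]
    [CommRing R] (a B : Matrix n n R) (y : n → R) :
    (a * (B * (vecMulVec y y - 1) * Bᵀ)ᵀ).trace
      = (B *ᵥ y) ⬝ᵥ a *ᵥ (B *ᵥ y) - (a * (B * Bᵀ)ᵀ).trace := by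
  rw [Matrix.mul_sub, Matrix.sub_mul, mul_one, mul_vecMulVec, vecMulVec_mul, vecMul_transpose,
    transpose_sub, transpose_vecMulVec, Matrix.mul_sub, trace_sub, mul_vecMulVec, trace_vecMulVec,
    dotProduct_comm]

theorem integral_eq_abs_det_mul_integral_comp_mulVec {ι : Type*} [Fintype ι] [DecidableEq ι]
    {M : Matrix ι ι ℝ} (hM : M.det ≠ 0) (f : (ι → ℝ) → ℝ) :
    ∫ x, f x = |M.det| * ∫ y, f (M *ᵥ y) := by
  have hdet : LinearMap.det (toLin' M) ≠ 0 := by rwa [LinearMap.det_toLin']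
  have he : MeasurableEmbedding (toLin' M) :=
    ((toLin' M).equivOfDetNeZero hdet).toContinuousLinearEquiv.toHomeomorph.measurableEmbedding
  have hmap := he.integral_map (μ := volume) f
  rw [Real.map_matrix_volume_pi_eq_smul_volume_pi hM, integral_smul_measure,
    ENNReal.toReal_ofReal (abs_nonneg _)] at hmap
  simp only [toLin'_apply] at hmap
  rw [← hmap, abs_inv, smul_eq_mul, ← mul_assoc, mul_inv_cancel₀ (abs_ne_zero.2 hM), one_mul]

section C₁fun

variable {d : ℕ} (σ₀ a : Matrix (Fin d) (Fin d) ℝ) (b : Fin d → ℝ) (h₀ : ℝ)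

theorem C₁fun_eq (y : Fin d → ℝ) :
    C₁fun d σ₀ a b h₀ y = _root_.enorm (σ₀ *ᵥ y) ^ 3 *
      (1 + √h₀ * |b ⬝ᵥ (σ₀ᵀ)⁻¹ *ᵥ y| + 1 / 2 *
        |((σ₀ᵀ)⁻¹ *ᵥ y) ⬝ᵥ a *ᵥ ((σ₀ᵀ)⁻¹ *ᵥ y) - (a * ((σ₀ᵀ)⁻¹ * (σ₀ᵀ)⁻¹ᵀ)ᵀ).trace|) := by
  rw [C₁fun, ← trace_mul_transpose_conj_vecMulVec_sub_one, transpose_nonsing_inv,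
    transpose_transpose]

theorem isBigO_C₁fun : C₁fun d σ₀ a b h₀ =O[⊤] fun y => (1 + ‖y‖) ^ 5 := by
  have hv : (fun y : Fin d → ℝ => (σ₀ᵀ)⁻¹ *ᵥ y) =O[⊤] fun y => (1 + ‖y‖) ^ 1 :=
    LinearMap.isBigO_one_add_norm (σ₀ᵀ)⁻¹.mulVecLin
  have hav : (fun y : Fin d → ℝ => a *ᵥ ((σ₀ᵀ)⁻¹ *ᵥ y)) =O[⊤] fun y => (1 + ‖y‖) ^ 1 := by
    simpa [mulVec_mulVec] using LinearMap.isBigO_one_add_norm (a * (σ₀ᵀ)⁻¹).mulVecLin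
  have hE : (fun y : Fin d → ℝ => _root_.enorm (σ₀ *ᵥ y) ^ 3) =O[⊤] fun y => (1 + ‖y‖) ^ 3 := by
    have := (LinearMap.isBigO_one_add_norm
      ((WithLp.linearEquiv 2 ℝ (Fin d → ℝ)).symm.toLinearMap ∘ₗ σ₀.mulVecLin)).norm_left.pow 3
    simpa [enorm_eq_norm_toLp, ← pow_mul] using this
  have hL := (isBigO_const_one_add_norm_pow b 0).dotProduct_one_add_norm_pow hv
  have hT := (hv.dotProduct_one_add_norm_pow hav).sub
    (isBigO_const_one_add_norm_pow (a * ((σ₀ᵀ)⁻¹ * (σ₀ᵀ)⁻¹ᵀ)ᵀ).trace 2)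
  have hfactor := ((isBigO_const_one_add_norm_pow (1 : ℝ) 2).add
    ((isBigO_abs_left.2 (hL.trans (isBigO_one_add_norm_pow (by norm_num)))).const_mul_left √h₀)).add
    ((isBigO_abs_left.2 hT).const_mul_left (1 / 2))
  simpa only [← C₁fun_eq] using hE.mul_one_add_norm_pow hfactor

theorem continuous_C₁fun : Continuous (C₁fun d σ₀ a b h₀) := by
  unfold C₁fun _root_.enorm
  fun_prop

theorem integrable_C₁fun : Integrable (C₁fun d σ₀ a b h₀) (stdGaussianPi d) :=
  (isBigO_C₁fun σ₀ a b h₀).integrable (continuous_C₁fun σ₀ a b h₀).aestronglyMeasurable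
    (integrable_one_add_norm_pow _ 5)

end C₁fun

section Substitution

variable {d : ℕ} {σ₀ a₀ : Matrix (Fin d) (Fin d) ℝ} {h : ℝ}

theorem gaussian_normalization_eq (ha₀ : a₀ = σ₀ * σ₀ᵀ) (hh : 0 < h) :
    (2 * Real.pi * h) ^ (-(d : ℝ) / 2) * a₀.det ^ (-(1 : ℝ) / 2)
      = (√h ^ d * |σ₀.det|)⁻¹ * (2 * Real.pi) ^ (-(d : ℝ) / 2) := by
  have hdet : a₀.det = |σ₀.det| ^ (2 : ℝ) := by
    rw [ha₀, det_mul, det_transpose, Real.rpow_two, sq_abs, sq]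
  rw [hdet, ← Real.rpow_mul (abs_nonneg _), show (2 : ℝ) * (-1 / 2) = -1 by norm_num,
    Real.rpow_neg_one, Real.mul_rpow (by positivity) hh.le, neg_div, Real.rpow_neg hh.le,
    Real.rpow_div_two_eq_sqrt _ hh.le, Real.rpow_natCast]
  ring

theorem fh_smul_mulVec (a : Matrix (Fin d) (Fin d) ℝ) (b : Fin d → ℝ) (hσ₀ : IsUnit σ₀)
    (ha₀ : a₀ = σ₀ * σ₀ᵀ) (hh : 0 < h) (y : Fin d → ℝ) :
    fh d h a₀ a b (√h • σ₀ *ᵥ y) = (√h ^ d * |σ₀.det|)⁻¹ * (∏ i, gaussianPDFReal 0 1 (y i)) *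
      (1 + √h * (b ⬝ᵥ (σ₀ᵀ)⁻¹ *ᵥ y) +
        1 / 2 * (a * ((σ₀ᵀ)⁻¹ * (vecMulVec y y - 1) * σ₀⁻¹)ᵀ).trace) := by
  have hdet : IsUnit σ₀.det := (isUnit_iff_isUnit_det σ₀).mp hσ₀
  have hσ₀inv : σ₀⁻¹ = (σ₀ᵀ)⁻¹ᵀ := by rw [transpose_nonsing_inv, transpose_transpose]
  have ha₀inv : a₀⁻¹ = (σ₀ᵀ)⁻¹ * σ₀⁻¹ := by rw [ha₀, Matrix.mul_inv_rev]
  set v := (σ₀ᵀ)⁻¹ *ᵥ y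
  have hv : a₀⁻¹ *ᵥ (√h • σ₀ *ᵥ y) = √h • v := by
    rw [mulVec_smul, ha₀inv, mulVec_mulVec, mul_assoc, nonsing_inv_mul _ hdet, mul_one]
  have hyy : (σ₀ *ᵥ y) ⬝ᵥ v = y ⬝ᵥ y := by
    rw [dotProduct_comm, dotProduct_mulVec, ← mulVec_transpose, mulVec_mulVec,
      mul_nonsing_inv _ (by rwa [det_transpose]), one_mulVec]
  have hsq : √h * √h = h := Real.mul_self_sqrt hh.le
  rw [fh, hv, gaussian_normalization_eq ha₀ hh, prod_gaussianPDFReal, hσ₀inv,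
    trace_mul_transpose_conj_vecMulVec_sub_one, ← hσ₀inv, ← ha₀inv]
  simp only [smul_dotProduct, dotProduct_smul, mulVec_smul, smul_eq_mul, hyy, ← mul_assoc, hsq]
  rw [show -(h * (y ⬝ᵥ y)) / (2 * h) = -(y ⬝ᵥ y) / 2 by field_simp]
  field_simp
  ring

theorem abs_det_mul_integrand_le (a : Matrix (Fin d) (Fin d) ℝ) (b : Fin d → ℝ) {h₀ : ℝ}
    (hσ₀ : IsUnit σ₀) (ha₀ : a₀ = σ₀ * σ₀ᵀ) (hh : 0 < h) (hhh₀ : h ≤ h₀) (y : Fin d → ℝ) :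
    |(√h • σ₀).det| * (_root_.enorm ((√h • σ₀) *ᵥ y) ^ 3 * |fh d h a₀ a b ((√h • σ₀) *ᵥ y)|)
      ≤ h ^ ((3 : ℝ) / 2) * ((∏ i, gaussianPDFReal 0 1 (y i)) * C₁fun d σ₀ a b h₀ y) := by
  have hdet : σ₀.det ≠ 0 := ((isUnit_iff_isUnit_det σ₀).mp hσ₀).ne_zero
  have hs : 0 < √h := Real.sqrt_pos.2 hh
  have hφ : 0 ≤ ∏ i, gaussianPDFReal 0 1 (y i) :=
    Finset.prod_nonneg fun i _ => gaussianPDFReal_nonneg _ _ _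
  set L := b ⬝ᵥ (σ₀ᵀ)⁻¹ *ᵥ y
  set T := (a * ((σ₀ᵀ)⁻¹ * (vecMulVec y y - 1) * σ₀⁻¹)ᵀ).trace
  have hP : |1 + √h * L + 1 / 2 * T| ≤ 1 + √h₀ * |L| + 1 / 2 * |T| := by
    refine (abs_add_three _ _ _).trans ?_
    rw [abs_one, abs_mul, abs_mul, abs_of_pos hs, abs_of_pos (by norm_num : (0 : ℝ) < 1 / 2)]
    gcongr
  have h32 : h ^ ((3 : ℝ) / 2) = √h ^ 3 := by
    rw [Real.rpow_div_two_eq_sqrt _ hh.le]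
    exact_mod_cast Real.rpow_natCast (√h) 3
  rw [smul_mulVec, fh_smul_mulVec a b hσ₀ ha₀ hh, det_smul, Fintype.card_fin,
    enorm_smul_of_nonneg hs.le, abs_mul, abs_mul, abs_mul, abs_of_nonneg (by positivity : (0 : ℝ) ≤ (√h ^ d * |σ₀.det|)⁻¹),
    abs_of_nonneg hφ, abs_pow, abs_of_pos hs, h32, C₁fun]
  calc √h ^ d * |σ₀.det| * ((√h * _root_.enorm (σ₀ *ᵥ y)) ^ 3 *
        ((√h ^ d * |σ₀.det|)⁻¹ * (∏ i, gaussianPDFReal 0 1 (y i)) * |1 + √h * L + 1 / 2 * T|))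
      = √h ^ 3 * ((∏ i, gaussianPDFReal 0 1 (y i)) *
          (_root_.enorm (σ₀ *ᵥ y) ^ 3 * |1 + √h * L + 1 / 2 * T|)) := by
        field_simp
    _ ≤ _ := by
        have hE : 0 ≤ _root_.enorm (σ₀ *ᵥ y) := Real.sqrt_nonneg _
        gcongr

end Substitution

theorem stmt7_general (d : ℕ)
    (σ₀ : Matrix (Fin d) (Fin d) ℝ) (hσ₀ : IsUnit σ₀)
    (a₀ a : Matrix (Fin d) (Fin d) ℝ) (ha₀ : a₀ = σ₀ * σ₀ᵀ)
    (b : Fin d → ℝ)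
    (h₀ : ℝ) :
    Integrable (C₁fun d σ₀ a b h₀) (stdGaussianPi d) ∧
      ∀ h : ℝ, 0 < h → h ≤ h₀ →
        ∫ x : Fin d → ℝ, _root_.enorm x ^ 3 * |fh d h a₀ a b x| ≤
          (∫ y : Fin d → ℝ, C₁fun d σ₀ a b h₀ y ∂stdGaussianPi d) * h ^ ((3 : ℝ) / 2) := by
  refine ⟨integrable_C₁fun σ₀ a b h₀, fun h hh hhh₀ => ?_⟩
  have hM : (√h • σ₀).det ≠ 0 := by
    rw [det_smul]
    exact mul_ne_zero (pow_ne_zero _ (Real.sqrt_pos.2 hh).ne')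
      ((isUnit_iff_isUnit_det σ₀).mp hσ₀).ne_zero
  calc ∫ x, _root_.enorm x ^ 3 * |fh d h a₀ a b x|
      = ∫ y, |(√h • σ₀).det| *
          (_root_.enorm ((√h • σ₀) *ᵥ y) ^ 3 * |fh d h a₀ a b ((√h • σ₀) *ᵥ y)|) := by
        rw [integral_eq_abs_det_mul_integral_comp_mulVec hM, integral_const_mul]
    _ ≤ ∫ y, h ^ ((3 : ℝ) / 2) * ((∏ i, gaussianPDFReal 0 1 (y i)) * C₁fun d σ₀ a b h₀ y) :=
        integral_mono_of_nonneg
          (ae_of_all _ fun y => mul_nonneg (abs_nonneg _)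
            (mul_nonneg (pow_nonneg (Real.sqrt_nonneg _) 3) (abs_nonneg _)))
          ((integrable_stdGaussianPi_iff.1 (integrable_C₁fun σ₀ a b h₀)).const_mul _)
          (ae_of_all _ (abs_det_mul_integrand_le a b hσ₀ ha₀ hh hhh₀))
    _ = _ := by rw [integral_const_mul, ← integral_stdGaussianPi, mul_comm]

/-- For every `h₀ > 0`, the constant `C₁ := E[|σ₀N|³(1 + √h₀ |b·((σ₀ᵀ)⁻¹N)|
+ (1/2)|a·((σ₀ᵀ)⁻¹(NNᵀ − I_d)σ₀⁻¹)|)]` (with `N` standard Gaussian in `ℝ^d`) is finite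
(the integrand is integrable), it does not depend on `h`, and
`∫_{ℝ^d} |x|³ |f_h(x)| dx ≤ C₁ h^{3/2}` for every `0 < h ≤ h₀`. -/
theorem stmt7 (d : ℕ) (hd : 1 ≤ d)
    (σ₀ : Matrix (Fin d) (Fin d) ℝ) (hσ₀ : IsUnit σ₀)
    (a₀ a : Matrix (Fin d) (Fin d) ℝ) (ha₀ : a₀ = σ₀ * σ₀ᵀ)
    (ha : a.PosSemidef) (b : Fin d → ℝ)
    (h₀ : ℝ) (hh₀ : 0 < h₀) :
    Integrable (C₁fun d σ₀ a b h₀) (stdGaussianPi d) ∧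
      ∀ h : ℝ, 0 < h → h ≤ h₀ →
        ∫ x : Fin d → ℝ, _root_.enorm x ^ 3 * |fh d h a₀ a b x| ≤
          (∫ y : Fin d → ℝ, C₁fun d σ₀ a b h₀ y ∂stdGaussianPi d) * h ^ ((3 : ℝ) / 2) :=
  stmt7_general d σ₀ hσ₀ a₀ a ha₀ b h₀
end

section
/- Assume m > −∞ and 1 − (1/2) a·a₀⁻¹ + h·m ≥ 0, so that f_h is a probability density on ℝ^d. Then the matrix (a + a₀) − h b bᵀ is positive definite; that is, vᵀ (a + a₀) v > h (b·v)² for every nonzero v ∈ ℝ^d. -/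
/-!
Testing the lower bound `m ≤ (1/2) wᵀaw + b·w` along the line `w = s v` gives, by the
discriminant of a quadratic in `s`, `(b·v)² ≤ -2m vᵀav`; with `t := a·a₀⁻¹` the hypothesis
`h m ≥ t/2 - 1` then yields `h (b·v)² ≤ (2 - t) vᵀav`. Conjugating by `σ₀` turns `a₀` into the
identity, where a positive semidefinite matrix is dominated by its trace: `vᵀav ≤ t vᵀa₀v`.
As `(1 - t) t ≤ 1/4`, this forces `(1 - t) vᵀav < vᵀa₀v`, and the claim follows.
-/

open MeasureTheory Matrix

section
variable {n : Type*} [Fintype n]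

lemma sq_dotProduct_le_of_forall_le {a : Matrix n n ℝ} {b : n → ℝ} {m : ℝ}
    (hm : ∀ w, m ≤ 1 / 2 * (w ⬝ᵥ (a *ᵥ w)) + b ⬝ᵥ w) (v : n → ℝ) :
    (b ⬝ᵥ v) ^ 2 ≤ -2 * m * (v ⬝ᵥ (a *ᵥ v)) := by
  have hquad : ∀ s : ℝ, 0 ≤ 1 / 2 * (v ⬝ᵥ (a *ᵥ v)) * (s * s) + (b ⬝ᵥ v) * s + -m := by
    intro s
    have := hm (s • v)
    simp only [mulVec_smul, dotProduct_smul, smul_dotProduct, smul_eq_mul] at this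
    linarith
  have hdisc := discrim_le_zero hquad
  rw [discrim] at hdisc
  linarith

lemma Matrix.PosSemidef.dotProduct_mulVec_le_trace_mul {A : Matrix n n ℝ} (hA : A.PosSemidef)
    (u : n → ℝ) : u ⬝ᵥ (A *ᵥ u) ≤ A.trace * (u ⬝ᵥ u) := by
  obtain ⟨k, w, rfl⟩ := Matrix.posSemidef_iff_eq_sum_vecMulVec.mp hA
  simp only [star_trivial, sum_mulVec, dotProduct_sum, trace_sum, trace_vecMulVec, Finset.sum_mul]
  refine Finset.sum_le_sum fun i _ => ?_
  rw [vecMulVec_mulVec, dotProduct_smul, op_smul_eq_mul, dotProduct_comm u (w i)]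
  simpa only [dotProduct, sq, ← mul_assoc] using
    Finset.sum_mul_sq_le_sq_mul_sq Finset.univ (w i) u

lemma dotProduct_mul_mul_transpose_mulVec (σ M : Matrix n n ℝ) (v : n → ℝ) :
    v ⬝ᵥ ((σ * M * σᵀ) *ᵥ v) = (σᵀ *ᵥ v) ⬝ᵥ (M *ᵥ (σᵀ *ᵥ v)) := by
  rw [mulVec_mulVec, mulVec_transpose, ← dotProduct_mulVec, mulVec_mulVec, ← Matrix.mul_assoc]

variable [DecidableEq n]

lemma Matrix.PosSemidef.dotProduct_mulVec_le_trace_mul_inv {a σ : Matrix n n ℝ}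
    (ha : a.PosSemidef) (hσ : IsUnit σ) (v : n → ℝ) :
    v ⬝ᵥ (a *ᵥ v) ≤ (a * (σ * σᵀ)⁻¹).trace * (v ⬝ᵥ ((σ * σᵀ) *ᵥ v)) := by
  have hσσ : σ * σ⁻¹ = 1 := mul_nonsing_inv σ ((isUnit_iff_isUnit_det σ).mp hσ)
  have hA : (σ⁻¹ * a * σ⁻¹ᵀ).PosSemidef := by
    simpa only [conjTranspose_eq_transpose_of_trivial] using ha.mul_mul_conjTranspose_same σ⁻¹
  have hcongr : σ * (σ⁻¹ * a * σ⁻¹ᵀ) * σᵀ = a := by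
    rw [Matrix.mul_assoc, Matrix.mul_assoc, ← transpose_mul, hσσ, transpose_one, Matrix.mul_one,
      ← Matrix.mul_assoc, hσσ, Matrix.one_mul]
  have htrace : (a * (σ * σᵀ)⁻¹).trace = (σ⁻¹ * a * σ⁻¹ᵀ).trace := by
    rw [mul_inv_rev, ← transpose_nonsing_inv, ← Matrix.mul_assoc, trace_mul_comm,
      Matrix.mul_assoc]
  have hu : v ⬝ᵥ ((σ * σᵀ) *ᵥ v) = (σᵀ *ᵥ v) ⬝ᵥ (σᵀ *ᵥ v) := by
    simpa using dotProduct_mul_mul_transpose_mulVec σ 1 v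
  calc v ⬝ᵥ (a *ᵥ v) = (σᵀ *ᵥ v) ⬝ᵥ ((σ⁻¹ * a * σ⁻¹ᵀ) *ᵥ (σᵀ *ᵥ v)) := by
        rw [← dotProduct_mul_mul_transpose_mulVec, hcongr]
    _ ≤ (σ⁻¹ * a * σ⁻¹ᵀ).trace * ((σᵀ *ᵥ v) ⬝ᵥ (σᵀ *ᵥ v)) :=
        hA.dotProduct_mulVec_le_trace_mul _
    _ = _ := by rw [htrace, hu]

end

lemma one_sub_mul_lt_of_le_mul {q p t : ℝ} (hq : 0 ≤ q) (hp : 0 < p) (hqp : q ≤ t * p) :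
    (1 - t) * q < p := by
  rcases le_or_gt t 1 with ht | ht
  · nlinarith [mul_le_mul_of_nonneg_left hqp (sub_nonneg.mpr ht), sq_nonneg (1 - 2 * t)]
  · nlinarith [mul_nonneg (sub_nonneg.mpr ht.le) hq]

theorem stmt9_general (d : ℕ) (h : ℝ) (hh : 0 < h)
    (σ₀ : Matrix (Fin d) (Fin d) ℝ) (hσ₀ : IsUnit σ₀)
    (a₀ a : Matrix (Fin d) (Fin d) ℝ) (ha₀ : a₀ = σ₀ * σ₀ᵀ)
    (ha : a.PosSemidef) (b : Fin d → ℝ)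
    (hbdd : BddBelow (Set.range fun w : Fin d → ℝ =>
      (1 / 2) * (w ⬝ᵥ a.mulVec w) + b ⬝ᵥ w))
    (hpos : 0 ≤ 1 - (1 / 2) * (a * a₀⁻¹ᵀ).trace +
      h * (⨅ w : Fin d → ℝ, ((1 / 2) * (w ⬝ᵥ a.mulVec w) + b ⬝ᵥ w))) :
    ∀ v : Fin d → ℝ, v ≠ 0 → h * (b ⬝ᵥ v) ^ 2 < v ⬝ᵥ (a + a₀).mulVec v := by
  intro v hv
  set m := ⨅ w : Fin d → ℝ, ((1 / 2) * (w ⬝ᵥ a.mulVec w) + b ⬝ᵥ w)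
  set t := (a * a₀⁻¹ᵀ).trace
  have ha₀_pos : a₀.PosDef := by
    simpa only [ha₀, conjTranspose_eq_transpose_of_trivial] using
      PosDef.mul_conjTranspose_self σ₀ (vecMul_injective_of_isUnit hσ₀)
  have hinv_symm : a₀⁻¹ᵀ = a₀⁻¹ := by
    rw [transpose_nonsing_inv, ha₀, transpose_mul, transpose_transpose]
  have hQ : 0 ≤ v ⬝ᵥ (a *ᵥ v) := by simpa using ha.dotProduct_mulVec_nonneg v
  have hP : 0 < v ⬝ᵥ (a₀ *ᵥ v) := by simpa using ha₀_pos.dotProduct_mulVec_pos hv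
  have htr : v ⬝ᵥ (a *ᵥ v) ≤ t * (v ⬝ᵥ (a₀ *ᵥ v)) := by
    simpa only [t, hinv_symm, ← ha₀] using ha.dotProduct_mulVec_le_trace_mul_inv hσ₀ v
  rw [add_mulVec, dotProduct_add]
  calc h * (b ⬝ᵥ v) ^ 2 ≤ h * (-2 * m * (v ⬝ᵥ (a *ᵥ v))) :=
        mul_le_mul_of_nonneg_left (sq_dotProduct_le_of_forall_le (ciInf_le hbdd) v) hh.le
    _ ≤ (2 - t) * (v ⬝ᵥ (a *ᵥ v)) := by nlinarith [mul_nonneg hpos hQ]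
    _ < v ⬝ᵥ (a *ᵥ v) + v ⬝ᵥ (a₀ *ᵥ v) := by
        linarith [one_sub_mul_lt_of_le_mul hQ hP htr]

/-- Assume `m := inf_w ((1/2) wᵀ a w + b·w) > −∞` and `1 − (1/2) a·a₀⁻¹ + h·m ≥ 0`
(so that `f_h` is a probability density on `ℝ^d`). Then the matrix `(a + a₀) − h b bᵀ` is
positive definite: `vᵀ (a + a₀) v > h (b·v)²` for every nonzero `v ∈ ℝ^d`. -/
theorem stmt9 (d : ℕ) (hd : 1 ≤ d) (h : ℝ) (hh : 0 < h)
    (σ₀ : Matrix (Fin d) (Fin d) ℝ) (hσ₀ : IsUnit σ₀)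
    (a₀ a : Matrix (Fin d) (Fin d) ℝ) (ha₀ : a₀ = σ₀ * σ₀ᵀ)
    (ha : a.PosSemidef) (b : Fin d → ℝ)
    (hbdd : BddBelow (Set.range fun w : Fin d → ℝ =>
      (1 / 2) * (w ⬝ᵥ a.mulVec w) + b ⬝ᵥ w))
    (hpos : 0 ≤ 1 - (1 / 2) * (a * a₀⁻¹ᵀ).trace +
      h * (⨅ w : Fin d → ℝ, ((1 / 2) * (w ⬝ᵥ a.mulVec w) + b ⬝ᵥ w))) :
    ∀ v : Fin d → ℝ, v ≠ 0 → h * (b ⬝ᵥ v) ^ 2 < v ⬝ᵥ (a + a₀).mulVec v :=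
  stmt9_general d h hh σ₀ hσ₀ a₀ a ha₀ ha b hbdd hpos
end
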